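/- In intuitionistic logic, for every variable-free formula E, a formula A is E-projective if and only if A is E-extendable (i.e. ⊢ A → E and every finite rooted Kripke model weakly forcing A and forcing E has a par-variant forcing A). -/

import Mathlib

inductive Form (var par : Type) : Type where
  | bot : Form var par
  | v : var → Form var par
  | p : par → Form var par
  | and : Form var par → Form var par → Form var par
  | or : Form var par → Form var par → Form var par
  | imp : Form var par → Form var par → Form var par

namespace Form
variable {var par : Type}

def neg (A : Form var par) : Form var par := A.imp .bot
def top : Form var par := Form.neg .bot
def fiff (A B : Form var par) : Form var par := (A.imp B).and (B.imp A)

/-- `varFree A`: `A` contains no variables (it lies in the parameter-only sublanguage). -/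
def varFree : Form var par → Prop
  | .bot => True
  | .v _ => False
  | .p _ => True
  | .and A B => varFree A ∧ varFree B
  | .or A B => varFree A ∧ varFree B
  | .imp A B => varFree A ∧ varFree B

/-- Substitutions act on variables, fix parameters, and commute with connectives. -/
def subst (θ : var → Form var par) : Form var par → Form var par
  | .bot => .bot
  | .v x => θ x
  | .p q => .p q
  | .and A B => (subst θ A).and (subst θ B)
  | .or A B => (subst θ A).or (subst θ B)
  | .imp A B => (subst θ A).imp (subst θ B)

end Form

/-- Hilbert-style provability: `cl = false` is intuitionistic logic (IPC),
`cl = true` is classical logic (CPC). -/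
inductive Prv {var par : Type} (cl : Bool) : Form var par → Prop where
  | mp {A B : Form var par} : Prv cl (A.imp B) → Prv cl A → Prv cl B
  | k {A B : Form var par} : Prv cl (A.imp (B.imp A))
  | s {A B C : Form var par} :
      Prv cl ((A.imp (B.imp C)).imp ((A.imp B).imp (A.imp C)))
  | andI {A B : Form var par} : Prv cl (A.imp (B.imp (A.and B)))
  | andE1 {A B : Form var par} : Prv cl ((A.and B).imp A)
  | andE2 {A B : Form var par} : Prv cl ((A.and B).imp B)
  | orI1 {A B : Form var par} : Prv cl (A.imp (A.or B))
  | orI2 {A B : Form var par} : Prv cl (B.imp (A.or B))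
  | orE {A B C : Form var par} :
      Prv cl ((A.imp C).imp ((B.imp C).imp ((A.or B).imp C)))
  | exf {A : Form var par} : Prv cl (Form.bot.imp A)
  | dne {A : Form var par} : cl = true → Prv cl (A.neg.neg.imp A)

/-- `U` is the uniform post-interpolant of `A` with respect to the parameters. -/
def IsUPI {var par : Type} (cl : Bool) (A U : Form var par) : Prop :=
  U.varFree ∧ Prv cl (A.imp U) ∧
    ∀ C : Form var par, C.varFree → Prv cl (A.imp C) → Prv cl (U.imp C)

/-- A finite rooted intuitionistic Kripke frame. -/
structure Frame where
  W : Type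
  fin : Fintype W
  le : W → W → Prop
  refl : ∀ w, le w w
  trans : ∀ a b c, le a b → le b c → le a c
  root : W
  root_le : ∀ w, le root w

/-- A persistent valuation on a frame. -/
structure Val (var par : Type) (F : Frame) where
  val : F.W → var ⊕ par → Prop
  mono : ∀ {w u : F.W} {a : var ⊕ par}, F.le w u → val w a → val u a

/-- Kripke forcing. -/
def force {var par : Type} (F : Frame) (V : Val var par F) : F.W → Form var par → Prop
  | _, .bot => False
  | w, .v x => V.val w (Sum.inl x)
  | w, .p q => V.val w (Sum.inr q)
  | w, .and A B => force F V w A ∧ force F V w B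
  | w, .or A B => force F V w A ∨ force F V w B
  | w, .imp A B => ∀ u, F.le w u → force F V u A → force F V u B

/-- `V'` is a par-variant of `V`: same valuation off the root, and the same
valuation of parameters at the root (only variables may change at the root). -/
def ParVariant {var par : Type} (F : Frame) (V V' : Val var par F) : Prop :=
  (∀ w : F.W, w ≠ F.root → ∀ a : var ⊕ par, V.val w a ↔ V'.val w a) ∧
  (∀ q : par, V.val F.root (Sum.inr q) ↔ V'.val F.root (Sum.inr q))

/-- `A` is `E`-projective. -/
def EProjective {var par : Type} (A E : Form var par) : Prop :=
  ∃ θ : var → Form var par,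
    (∀ x : var, Prv false (A.imp ((θ x).fiff (Form.v x)))) ∧
    Prv false ((Form.subst θ A).fiff E)

/-- `A` is `E`-extendable. -/
def EExtendable {var par : Type} (A E : Form var par) : Prop :=
  Prv false (A.imp E) ∧
    ∀ (F : Frame) (V : Val var par F),
      (∀ w : F.W, w ≠ F.root → force F V w A) →
      (∀ w : F.W, force F V w E) →
      ∃ V' : Val var par F, ParVariant F V V' ∧ ∀ w : F.W, force F V' w A

/-!
Both directions are argued in finite Kripke models, completeness of IPC for them turning
forcing arguments into derivations.

An `E`-projective unifier `θ` of `A` acts as the identity above every node forcing `A`.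
So when `A` is forced off the root and `E` everywhere, `V ∘ θ` is a par-variant of `V`,
and it forces `A` because `V` forces `θ(A) ↔ E`.

Conversely, let `θ_A = θ_A^{X₀} ∘ ⋯ ∘ θ_A^{Xₙ}` run over all sets of variables of `A`,
no set preceding a superset of itself. Each `θ_A^X` is the identity above nodes forcing
`A`, which gives `A ⊢ θ_A(x) ↔ x`, and at a node not forcing `A` it makes true exactly the
`x ∈ X` with `A → x` forced there. In a model of `E`, by induction on the depth of `w`:
once every strict successor of `w` ends up forcing `A`, extendability on the cone above
`w` yields an extension whose root makes true exactly the variables of `A` in some `Xₛ`;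
right after `θ_A^{Xₛ}` the valuation agrees with that extension on the cone, so `w` forces
`A`. Hence
`⊢ E → θ_A(A)`, and `⊢ θ_A(A) → E` is a substitution instance of `⊢ A → E`.
-/

namespace Form
variable {var par : Type}

def vars [DecidableEq var] : Form var par → Finset var
  | .bot => ∅
  | .v x => {x}
  | .p _ => ∅
  | .and A B => A.vars ∪ B.vars
  | .or A B => A.vars ∪ B.vars
  | .imp A B => A.vars ∪ B.vars

theorem vars_eq_empty [DecidableEq var] {B : Form var par} (h : B.varFree) : B.vars = ∅ := by
  induction B with
  | v x => exact h.elim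
  | and C D ihC ihD | or C D ihC ihD | imp C D ihC ihD => simp [vars, ihC h.1, ihD h.2]
  | _ => rfl

theorem subst_v (B : Form var par) : B.subst Form.v = B := by
  induction B <;> simp [subst, *]

theorem subst_subst (σ τ : var → Form var par) (B : Form var par) :
    (B.subst τ).subst σ = B.subst fun x => (τ x).subst σ := by
  induction B <;> simp [subst, *]

theorem subst_eq_self_of_varFree {B : Form var par} (h : B.varFree) (σ : var → Form var par) :
    B.subst σ = B := by
  induction B with
  | v x => exact h.elim
  | and C D ihC ihD | or C D ihC ihD | imp C D ihC ihD => simp [subst, ihC h.1, ihD h.2]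
  | _ => rfl

def subformulas : Form var par → Set (Form var par)
  | .bot => {.bot}
  | .v x => {.v x}
  | .p q => {.p q}
  | .and A B => insert (A.and B) (A.subformulas ∪ B.subformulas)
  | .or A B => insert (A.or B) (A.subformulas ∪ B.subformulas)
  | .imp A B => insert (A.imp B) (A.subformulas ∪ B.subformulas)

theorem mem_subformulas_self (B : Form var par) : B ∈ B.subformulas := by
  cases B <;> simp [subformulas]

theorem subformulas_subset {B C : Form var par} (h : C ∈ B.subformulas) :
    C.subformulas ⊆ B.subformulas := by
  induction B with
  | and D D' ihD ihD' | or D D' ihD ihD' | imp D D' ihD ihD' =>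
    simp only [subformulas, Set.mem_insert_iff, Set.mem_union] at h
    rcases h with rfl | h | h
    · exact subset_rfl
    · exact (ihD h).trans (Set.subset_union_left.trans (Set.subset_insert _ _))
    · exact (ihD' h).trans (Set.subset_union_right.trans (Set.subset_insert _ _))
  | _ => simp_all [subformulas]

theorem subformulas_and {B C D : Form var par} (h : C.and D ∈ B.subformulas) :
    C ∈ B.subformulas ∧ D ∈ B.subformulas :=
  ⟨subformulas_subset h (by simp [subformulas, mem_subformulas_self]),
    subformulas_subset h (by simp [subformulas, mem_subformulas_self])⟩

theorem subformulas_or {B C D : Form var par} (h : C.or D ∈ B.subformulas) :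
    C ∈ B.subformulas ∧ D ∈ B.subformulas :=
  ⟨subformulas_subset h (by simp [subformulas, mem_subformulas_self]),
    subformulas_subset h (by simp [subformulas, mem_subformulas_self])⟩

theorem subformulas_imp {B C D : Form var par} (h : C.imp D ∈ B.subformulas) :
    C ∈ B.subformulas ∧ D ∈ B.subformulas :=
  ⟨subformulas_subset h (by simp [subformulas, mem_subformulas_self]),
    subformulas_subset h (by simp [subformulas, mem_subformulas_self])⟩

theorem finite_subformulas (B : Form var par) : B.subformulas.Finite := by
  induction B <;> simp_all [subformulas]

end Form

namespace Prv
variable {var par : Type}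

theorem imp_refl (A : Form var par) : Prv false (A.imp A) :=
  mp (mp (s (B := A.imp A)) k) k

theorem subst {cl : Bool} {B : Form var par} (σ : var → Form var par) (h : Prv cl B) :
    Prv cl (B.subst σ) := by
  induction h with
  | mp _ _ ih₁ ih₂ => exact mp ih₁ ih₂
  | k => exact k
  | s => exact s
  | andI => exact andI
  | andE1 => exact andE1
  | andE2 => exact andE2
  | orI1 => exact orI1
  | orI2 => exact orI2
  | orE => exact orE
  | exf => exact exf
  | dne hcl => exact dne hcl

theorem fiff_intro {A B : Form var par} (h₁ : Prv false (A.imp B)) (h₂ : Prv false (B.imp A)) :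
    Prv false (A.fiff B) :=
  mp (mp andI h₁) h₂

end Prv

section Kripke
variable {var par : Type} {F : Frame}

theorem force_mono {V : Val var par F} {w u : F.W} (h : F.le w u) {B : Form var par}
    (hB : force F V w B) : force F V u B := by
  induction B generalizing w u with
  | bot => exact hB
  | v x | p q => exact V.mono h hB
  | and C D ihC ihD => exact ⟨ihC h hB.1, ihD h hB.2⟩
  | or C D ihC ihD => exact hB.imp (ihC h) (ihD h)
  | imp C D => exact fun t ht => hB t (F.trans _ _ _ h ht)

theorem force_congr [DecidableEq var] {V V' : Val var par F} {B : Form var par} {w : F.W}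
    (hv : ∀ u, F.le w u → ∀ x ∈ B.vars, (V.val u (.inl x) ↔ V'.val u (.inl x)))
    (hp : ∀ u, F.le w u → ∀ q, (V.val u (.inr q) ↔ V'.val u (.inr q))) :
    force F V w B ↔ force F V' w B := by
  induction B generalizing w with
  | bot => rfl
  | v x => exact hv w (F.refl w) x (Finset.mem_singleton_self x)
  | p q => exact hp w (F.refl w) q
  | and C D ihC ihD =>
    exact and_congr (ihC (fun u hu x hx => hv u hu x (Finset.mem_union_left _ hx)) hp)
      (ihD (fun u hu x hx => hv u hu x (Finset.mem_union_right _ hx)) hp)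
  | or C D ihC ihD =>
    exact or_congr (ihC (fun u hu x hx => hv u hu x (Finset.mem_union_left _ hx)) hp)
      (ihD (fun u hu x hx => hv u hu x (Finset.mem_union_right _ hx)) hp)
  | imp C D ihC ihD =>
    refine forall₂_congr fun u hu => imp_congr ?_ ?_
    · exact ihC (fun t ht x hx => hv t (F.trans _ _ _ hu ht) x (Finset.mem_union_left _ hx))
        fun t ht => hp t (F.trans _ _ _ hu ht)
    · exact ihD (fun t ht x hx => hv t (F.trans _ _ _ hu ht) x (Finset.mem_union_right _ hx))
        fun t ht => hp t (F.trans _ _ _ hu ht)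

theorem force_fiff {V : Val var par F} {w : F.W} {B C : Form var par} :
    force F V w (B.fiff C) ↔ ∀ u, F.le w u → (force F V u B ↔ force F V u C) :=
  ⟨fun h u hu => ⟨h.1 u hu, h.2 u hu⟩,
    fun h => ⟨fun u hu => (h u hu).1, fun u hu => (h u hu).2⟩⟩

def Val.comp (V : Val var par F) (σ : var → Form var par) : Val var par F where
  val w
    | .inl x => force F V w (σ x)
    | .inr q => V.val w (.inr q)
  mono {_ _ a} h := match a with
    | .inl _ => force_mono h
    | .inr _ => V.mono h

theorem force_comp {V : Val var par F} {σ : var → Form var par} {w : F.W} {B : Form var par} :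
    force F (V.comp σ) w B ↔ force F V w (B.subst σ) := by
  induction B generalizing w with
  | bot | v x | p q => rfl
  | and C D ihC ihD => exact and_congr ihC ihD
  | or C D ihC ihD => exact or_congr ihC ihD
  | imp C D ihC ihD => exact forall₂_congr fun _ _ => imp_congr ihC ihD

theorem Prv.sound {B : Form var par} (h : Prv false B) (V : Val var par F) (w : F.W) :
    force F V w B := by
  induction h generalizing w with
  | mp _ _ ih₁ ih₂ => exact ih₁ w w (F.refl w) (ih₂ w)
  | k => exact fun u _ hA t hut _ => force_mono hut hA
  | s =>
    intro u _ h₁ t hut h₂ r htr hA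
    exact h₁ r (F.trans _ _ _ hut htr) hA r (F.refl r) (h₂ r htr hA)
  | andI => exact fun u _ hA t hut hB => ⟨force_mono hut hA, hB⟩
  | andE1 => exact fun _ _ h => h.1
  | andE2 => exact fun _ _ h => h.2
  | orI1 => exact fun _ _ h => Or.inl h
  | orI2 => exact fun _ _ h => Or.inr h
  | orE =>
    intro u _ h₁ t hut h₂ r htr h
    exact h.elim (h₁ r (F.trans _ _ _ hut htr) ·) (h₂ r htr ·)
  | exf => exact fun _ _ h => h.elim
  | dne hcl => exact absurd hcl Bool.false_ne_true

def Val.AgreeAbove (V V' : Val var par F) (w : F.W) : Prop :=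
  ∀ u, F.le w u → ∀ a, V.val u a ↔ V'.val u a

namespace Val.AgreeAbove
variable {V V' V'' : Val var par F} {w : F.W}

theorem trans (h : V.AgreeAbove V' w) (h' : V'.AgreeAbove V'' w) : V.AgreeAbove V'' w :=
  fun u hu a => (h u hu a).trans (h' u hu a)

theorem force_iff (h : V.AgreeAbove V' w) {B : Form var par} :
    force F V w B ↔ force F V' w B := by
  classical
  exact force_congr (fun u hu x _ => h u hu _) fun u hu q => h u hu _

end Val.AgreeAbove

theorem agreeAbove_comp_of_prv {A : Form var par} {θ : var → Form var par}
    (hθ : ∀ x, Prv false (A.imp ((θ x).fiff (.v x)))) {V : Val var par F} {w : F.W}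
    (hA : force F V w A) : (V.comp θ).AgreeAbove V w
  | u, hu, .inl x => force_fiff.1 ((hθ x).sound V w w (F.refl w) hA) u hu
  | _, _, .inr _ => Iff.rfl

end Kripke

section Completeness
variable {var par : Type}

inductive Deriv (Γ : Set (Form var par)) : Form var par → Prop
  | hyp {C : Form var par} : C ∈ Γ → Deriv Γ C
  | thm {C : Form var par} : Prv false C → Deriv Γ C
  | mp {C D : Form var par} : Deriv Γ (C.imp D) → Deriv Γ C → Deriv Γ D

namespace Deriv
variable {Γ : Set (Form var par)} {C D : Form var par}

theorem of_imp (h : Prv false (C.imp D)) (hC : Deriv Γ C) : Deriv Γ D :=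
  mp (thm h) hC

theorem imp_intro (h : Deriv (insert C Γ) D) : Deriv Γ (C.imp D) := by
  induction h with
  | hyp hD =>
    rcases hD with rfl | hD
    · exact thm (Prv.imp_refl _)
    · exact of_imp Prv.k (hyp hD)
  | thm hD => exact of_imp Prv.k (thm hD)
  | mp _ _ ih₁ ih₂ => exact mp (of_imp Prv.s ih₁) ih₂

theorem or_elim {C₁ C₂ : Form var par} (h : Deriv Γ (C₁.or C₂))
    (h₁ : Deriv (insert C₁ Γ) D) (h₂ : Deriv (insert C₂ Γ) D) : Deriv Γ D :=
  mp (mp (of_imp Prv.orE (imp_intro h₁)) (imp_intro h₂)) h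

theorem prv (h : Deriv ∅ C) : Prv false C := by
  induction h with
  | hyp hC => exact hC.elim
  | thm hC => exact hC
  | mp _ _ ih₁ ih₂ => exact Prv.mp ih₁ ih₂

end Deriv

structure Saturated (B : Form var par) (T : Set (Form var par)) : Prop where
  subset : T ⊆ B.subformulas
  consistent : ¬ Deriv T .bot
  closed : ∀ C ∈ B.subformulas, Deriv T C → C ∈ T
  prime : ∀ C D, C.or D ∈ T → C ∈ T ∨ D ∈ T

/-- Lindenbaum's lemma: a maximal `G`-avoiding extension is saturated. -/
theorem exists_saturated {B G : Form var par} {T : Set (Form var par)}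
    (hT : T ⊆ B.subformulas) (hG : ¬ Deriv T G) :
    ∃ T', T ⊆ T' ∧ Saturated B T' ∧ ¬ Deriv T' G := by
  let S := {T' | T ⊆ T' ∧ T' ⊆ B.subformulas ∧ ¬ Deriv T' G}
  have hfin : S.Finite :=
    (B.finite_subformulas.finite_subsets).subset fun T' h => h.2.1
  obtain ⟨M, ⟨hTM, hMB, hMG⟩, hmax⟩ := hfin.exists_maximal ⟨T, subset_rfl, hT, hG⟩
  have hadd : ∀ C ∈ B.subformulas, C ∈ M ∨ Deriv (insert C M) G := by
    intro C hC
    by_contra! h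
    exact h.1 (hmax ⟨hTM.trans (Set.subset_insert _ _), Set.insert_subset hC hMB, h.2⟩
      (Set.subset_insert _ _) (Set.mem_insert _ _))
  refine ⟨M, hTM, ⟨hMB, fun h => hMG (.of_imp Prv.exf h), ?_, ?_⟩, hMG⟩
  · intro C hC hMC
    exact (hadd C hC).resolve_right fun h => hMG (.mp (.imp_intro h) hMC)
  · intro C D hCD
    obtain ⟨hC, hD⟩ := Form.subformulas_or (hMB hCD)
    rcases hadd C hC with hC | hC'
    · exact .inl hC
    rcases hadd D hD with hD | hD'
    · exact .inr hD
    exact (hMG (.or_elim (.hyp hCD) hC' hD')).elim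

end Completeness

section Canonical
variable {var par : Type} {B : Form var par} {T₀ : Set (Form var par)}

noncomputable def canonicalFrame (B : Form var par) (T₀ : Set (Form var par))
    (h₀ : Saturated B T₀) : Frame where
  W := {T : Set (Form var par) // Saturated B T ∧ T₀ ⊆ T}
  fin :=
    have : Finite {T : Set (Form var par) // Saturated B T ∧ T₀ ⊆ T} :=
      (B.finite_subformulas.finite_subsets.subset fun _ h => h.1.subset).to_subtype
    Fintype.ofFinite _
  le T T' := T.1 ⊆ T'.1
  refl _ := subset_rfl
  trans _ _ _ := Set.Subset.trans
  root := ⟨T₀, h₀, subset_rfl⟩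
  root_le T := T.2.2

def canonicalVal (h₀ : Saturated B T₀) : Val var par (canonicalFrame B T₀ h₀) where
  val T a := Sum.elim Form.v Form.p a ∈ T.1
  mono h ha := h ha

theorem force_canonicalVal (h₀ : Saturated B T₀) {C : Form var par} (hC : C ∈ B.subformulas)
    (T : (canonicalFrame B T₀ h₀).W) :
    force _ (canonicalVal h₀) T C ↔ C ∈ T.1 := by
  induction C generalizing T with
  | bot => exact ⟨False.elim, fun h => T.2.1.consistent (.hyp h)⟩
  | v x | p q => rfl
  | and C D ihC ihD =>
    obtain ⟨hC', hD'⟩ := Form.subformulas_and hC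
    rw [force, ihC hC', ihD hD']
    exact ⟨fun h => T.2.1.closed _ hC (.mp (.of_imp Prv.andI (.hyp h.1)) (.hyp h.2)),
      fun h => ⟨T.2.1.closed _ hC' (.of_imp Prv.andE1 (.hyp h)),
        T.2.1.closed _ hD' (.of_imp Prv.andE2 (.hyp h))⟩⟩
  | or C D ihC ihD =>
    obtain ⟨hC', hD'⟩ := Form.subformulas_or hC
    rw [force, ihC hC', ihD hD']
    refine ⟨fun h => ?_, T.2.1.prime C D⟩
    rcases h with h | h
    · exact T.2.1.closed _ hC (.of_imp Prv.orI1 (.hyp h))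
    · exact T.2.1.closed _ hC (.of_imp Prv.orI2 (.hyp h))
  | imp C D ihC ihD =>
    obtain ⟨hC', hD'⟩ := Form.subformulas_imp hC
    constructor
    · intro h
      by_contra hCD
      have hD : ¬ Deriv (insert C T.1) D := fun hD => hCD (T.2.1.closed _ hC (.imp_intro hD))
      obtain ⟨T', hTT', hT', hT'D⟩ := exists_saturated (Set.insert_subset hC' T.2.1.subset) hD
      let U : (canonicalFrame B T₀ h₀).W :=
        ⟨T', hT', T.2.2.trans ((Set.subset_insert _ _).trans hTT')⟩
      have hUC : force _ (canonicalVal h₀) U C := (ihC hC' U).2 (hTT' (Set.mem_insert _ _))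
      exact hT'D (.hyp ((ihD hD' U).1 (h U ((Set.subset_insert _ _).trans hTT') hUC)))
    · intro h T' hTT' hCT'
      exact (ihD hD' T').2
        (T'.2.1.closed _ hD' (.mp (.hyp (hTT' h)) (.hyp ((ihC hC' T').1 hCT'))))

theorem prv_of_forall_force {B : Form var par}
    (h : ∀ (F : Frame) (V : Val var par F) (w : F.W), force F V w B) : Prv false B := by
  by_contra hB
  obtain ⟨T₀, -, h₀, hT₀B⟩ :=
    exists_saturated (G := B) (Set.empty_subset B.subformulas) fun h => hB h.prv
  have hBT₀ := (force_canonicalVal h₀ B.mem_subformulas_self _).1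
    (h _ (canonicalVal h₀) (canonicalFrame B T₀ h₀).root)
  exact hT₀B (.hyp hBT₀)

theorem prv_imp_of_forall_force {A : Form var par}
    (h : ∀ (F : Frame) (V : Val var par F) (w : F.W), force F V w A → force F V w B) :
    Prv false (A.imp B) :=
  prv_of_forall_force fun F V _ u _ hA => h F V u hA

theorem prv_imp_fiff_of_forall_force {A C : Form var par}
    (h : ∀ (F : Frame) (V : Val var par F) (w : F.W),
      force F V w A → (force F V w B ↔ force F V w C)) :
    Prv false (A.imp (B.fiff C)) :=
  prv_imp_of_forall_force fun F V _ hA => force_fiff.2 fun u hu => h F V u (force_mono hu hA)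

end Canonical

theorem EProjective.eExtendable {var par : Type} {A E : Form var par} (h : EProjective A E) :
    EExtendable A E := by
  obtain ⟨θ, hθ, hθE⟩ := h
  have hθE' {F : Frame} (V : Val var par F) (w : F.W) :
      force F V w (A.subst θ) ↔ force F V w E :=
    force_fiff.1 (hθE.sound V w) w (F.refl w)
  refine ⟨prv_imp_of_forall_force fun F V w hA => ?_,
    fun F V hA hE => ⟨V.comp θ, ?_, fun w => ?_⟩⟩
  · exact (hθE' V w).1 (force_comp.1 ((agreeAbove_comp_of_prv hθ hA).force_iff.2 hA))
  · exact ⟨fun w hw a => (agreeAbove_comp_of_prv hθ (hA w hw) w (F.refl w) a).symm,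
      fun _ => Iff.rfl⟩
  · exact force_comp.2 ((hθE' V w).2 (hE w))

section Cone
variable {var par : Type} {F : Frame}

/-- The cone above `w` with the rest of `w`'s cluster removed, so that `w` is its only root. -/
noncomputable def Frame.cone (F : Frame) (w : F.W) : Frame where
  W := {u : F.W // F.le w u ∧ (F.le u w → u = w)}
  fin := haveI := F.fin; Fintype.ofFinite _
  le u v := F.le u.1 v.1
  refl u := F.refl u.1
  trans _ _ _ := F.trans _ _ _
  root := ⟨w, F.refl w, fun _ => rfl⟩
  root_le u := u.2.1

def Val.cone (V : Val var par F) (w : F.W) : Val var par (F.cone w) where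
  val u := V.val u.1
  mono h := V.mono h

theorem Frame.cone_not_le {w : F.W} {u : (F.cone w).W} (hu : u ≠ (F.cone w).root) :
    ¬ F.le u.1 w :=
  fun h => hu (Subtype.ext (u.2.2 h))

theorem force_cone {V : Val var par F} {w : F.W} (u : (F.cone w).W) {B : Form var par} :
    force (F.cone w) (V.cone w) u B ↔ force F V u.1 B := by
  induction B generalizing u with
  | bot | v x | p q => rfl
  | and C D ihC ihD => exact and_congr (ihC u) (ihD u)
  | or C D ihC ihD => exact or_congr (ihC u) (ihD u)
  | imp C D ihC ihD =>
    refine ⟨fun h t hut hC => ?_, fun h t hut hC => (ihD t).2 (h t.1 hut ((ihC t).1 hC))⟩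
    by_cases htw : F.le t w
    · exact force_mono hut ((ihD u).1
        (h u (F.refl _) ((ihC u).2 (force_mono (F.trans _ _ _ htw u.2.1) hC))))
    · exact (ihD ⟨t, F.trans _ _ _ u.2.1 hut, fun h => absurd h htw⟩).1
        (h _ hut ((ihC _).2 hC))

theorem force_of_agree_cone [DecidableEq var] {V : Val var par F} {w : F.W}
    {U : Val var par (F.cone w)} {B : Form var par} (hB : force _ U (F.cone w).root B)
    (hv : ∀ u : (F.cone w).W, ∀ x ∈ B.vars, V.val u.1 (.inl x) ↔ U.val u (.inl x))
    (hp : ∀ (u : (F.cone w).W) (q : par), V.val u.1 (.inr q) ↔ U.val u (.inr q)) :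
    force F V w B :=
  (force_cone (F.cone w).root).1 ((force_congr (fun u _ => hv u) fun u _ => hp u).2 hB)

theorem ParVariant.val_of_cone_root {W : Val var par F} {w : F.W} {U : Val var par (F.cone w)}
    (hU : ParVariant _ (W.cone w) U) {u : F.W} (hwu : F.le w u) (huw : ¬ F.le u w)
    {a : var ⊕ par} (ha : U.val (F.cone w).root a) : W.val u a := by
  let u' : (F.cone w).W := ⟨u, hwu, fun h => absurd h huw⟩
  have hne : u' ≠ (F.cone w).root := fun h => by
    obtain rfl : u = w := congrArg Subtype.val h
    exact huw (F.refl u)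
  exact (hU.1 u' hne a).2 (U.mono ((F.cone w).root_le u') ha)

theorem Frame.wellFounded_above (F : Frame) :
    WellFounded fun u w : F.W => F.le w u ∧ ¬ F.le u w :=
  haveI := F.fin
  haveI : IsTrans F.W fun u w => F.le w u ∧ ¬ F.le u w :=
    ⟨fun _ _ _ h₁ h₂ =>
      ⟨F.trans _ _ _ h₂.1 h₁.1, fun h => h₂.2 (F.trans _ _ _ h₁.1 h)⟩⟩
  haveI : Std.Irrefl fun u w : F.W => F.le w u ∧ ¬ F.le u w := ⟨fun a h => h.2 (F.refl a)⟩
  Finite.wellFounded_of_trans_of_irrefl _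

end Cone

theorem exists_list_subsets_pairwise_not_subset {α : Type} (S : Finset α) :
    ∃ L : List (Finset α), L.Pairwise (fun X Y => ¬ X ⊆ Y) ∧ ∀ X ⊆ S, X ∈ L := by
  let byCard : Finset α → Finset α → Bool := fun X Y => decide (Y.card ≤ X.card)
  refine ⟨S.powerset.toList.mergeSort byCard, ?_,
    fun X hX => by simpa [List.mem_mergeSort] using hX⟩
  have hsorted := List.pairwise_mergeSort (le := byCard)
    (by simp only [byCard, decide_eq_true_eq]; omega)
    (by simp only [byCard, Bool.or_eq_true, decide_eq_true_eq]; omega) S.powerset.toList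
  have hnodup := (List.mergeSort_perm S.powerset.toList byCard).nodup_iff.2 (Finset.nodup_toList _)
  exact (hsorted.and hnodup).imp fun hXY hsub =>
    hXY.2 (Finset.eq_of_subset_of_card_le hsub (by simpa [byCard] using hXY.1))

section Ghilardi
variable {var par : Type} [DecidableEq var] {F : Frame}

/-- `θ_A^X`. -/
def ghilardiStep (A : Form var par) (X : Finset var) (x : var) : Form var par :=
  if x ∈ X then A.imp (.v x) else A.and (.v x)

/-- `θ_A^{X₀} ∘ ⋯ ∘ θ_A^{Xₙ}` for `L = [X₀, …, Xₙ]`. -/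
def ghilardiComp (A : Form var par) : List (Finset var) → var → Form var par
  | [] => .v
  | X :: L => fun x => (ghilardiComp A L x).subst (ghilardiStep A X)

def ghilardiVal (A : Form var par) (V : Val var par F) : List (Finset var) → Val var par F
  | [] => V
  | X :: L => ghilardiVal A (V.comp (ghilardiStep A X)) L

variable {A : Form var par}

theorem force_ghilardiVal {V : Val var par F} {L : List (Finset var)} {w : F.W}
    {B : Form var par} :
    force F (ghilardiVal A V L) w B ↔ force F V w (B.subst (ghilardiComp A L)) := by
  induction L generalizing V with
  | nil => rw [ghilardiComp, Form.subst_v]; rfl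
  | cons X L ih =>
    rw [ghilardiVal, ih, force_comp, Form.subst_subst]
    rfl

theorem ghilardiVal_append (V : Val var par F) (L₁ L₂ : List (Finset var)) :
    ghilardiVal A V (L₁ ++ L₂) = ghilardiVal A (ghilardiVal A V L₁) L₂ := by
  induction L₁ generalizing V with
  | nil => rfl
  | cons X L ih => exact ih _

theorem ghilardiVal_inr {V : Val var par F} {L : List (Finset var)} {u : F.W} {q : par} :
    (ghilardiVal A V L).val u (.inr q) ↔ V.val u (.inr q) := by
  induction L generalizing V with
  | nil => rfl
  | cons X L ih => exact ih

theorem agreeAbove_comp_ghilardiStep {V : Val var par F} {w : F.W} (hA : force F V w A)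
    (X : Finset var) : (V.comp (ghilardiStep A X)).AgreeAbove V w := by
  intro u hu a
  have hAu := force_mono hu hA
  cases a with
  | inr q => rfl
  | inl x =>
    change force F V u (ghilardiStep A X x) ↔ _
    unfold ghilardiStep
    split_ifs
    · exact ⟨fun h => h u (F.refl u) hAu, fun h t hut _ => V.mono hut h⟩
    · exact ⟨And.right, And.intro hAu⟩

theorem agreeAbove_ghilardiVal {V : Val var par F} {w : F.W} (hA : force F V w A)
    (L : List (Finset var)) : (ghilardiVal A V L).AgreeAbove V w := by
  induction L generalizing V with
  | nil => exact fun _ _ _ => Iff.rfl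
  | cons X L ih =>
    have hX := agreeAbove_comp_ghilardiStep hA X
    exact (ih (hX.force_iff.2 hA)).trans hX

theorem comp_ghilardiStep_val_of_not_force {V : Val var par F} {w : F.W} (hA : ¬ force F V w A)
    (X : Finset var) (x : var) :
    (V.comp (ghilardiStep A X)).val w (.inl x) ↔ x ∈ X ∧ force F V w (A.imp (.v x)) := by
  change force F V w (ghilardiStep A X x) ↔ _
  unfold ghilardiStep
  split_ifs with hx
  · exact ⟨And.intro hx, And.right⟩
  · exact ⟨fun h => absurd h.1 hA, fun h => absurd h.1 hx⟩

theorem comp_ghilardiStep_val_iff {V : Val var par F} {w : F.W} {X : Finset var}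
    (hA : ¬ force F V w A)
    (hX : ∀ u, F.le w u → ¬ F.le u w → force F V u A → ∀ x ∈ X, V.val u (.inl x))
    (x : var) :
    (V.comp (ghilardiStep A X)).val w (.inl x) ↔ x ∈ X := by
  refine (comp_ghilardiStep_val_of_not_force hA X x).trans ⟨And.left, fun hx => ⟨hx, ?_⟩⟩
  intro u hwu hAu
  by_cases huw : F.le u w
  · exact absurd (force_mono huw hAu) hA
  · exact hX u hwu huw hAu x hx

end Ghilardi

section Stages
variable {var par : Type} [DecidableEq var] {F : Frame} {A : Form var par}
  {V : Val var par F} {L : List (Finset var)}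

theorem ghilardiVal_take_succ {i : ℕ} (hi : i < L.length) :
    ghilardiVal A V (L.take (i + 1)) =
      (ghilardiVal A V (L.take i)).comp (ghilardiStep A L[i]) := by
  rw [List.take_add_one, List.getElem?_eq_getElem hi, ghilardiVal_append]
  rfl

theorem agreeAbove_ghilardiVal_take {i j : ℕ} (hij : i ≤ j) {u : F.W}
    (hA : force F (ghilardiVal A V (L.take i)) u A) :
    (ghilardiVal A V (L.take j)).AgreeAbove (ghilardiVal A V (L.take i)) u := by
  rw [← List.take_append_drop i (L.take j), List.take_take, min_eq_left hij, ghilardiVal_append]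
  exact agreeAbove_ghilardiVal hA _

theorem agreeAbove_ghilardiVal_of_take {i : ℕ} {u : F.W}
    (hA : force F (ghilardiVal A V (L.take i)) u A) :
    (ghilardiVal A V L).AgreeAbove (ghilardiVal A V (L.take i)) u := by
  simpa [← ghilardiVal_append] using agreeAbove_ghilardiVal hA (L.drop i)

/-- If `u` first forced `A` at a stage `k + 1 > s + 1`, it would make true there only
variables in `L[k]`, and `L[s] ⊆ L[k]` would contradict the order of `L`. -/
theorem exists_take_force_le (hL : L.Pairwise fun X Y => ¬ X ⊆ Y) {s : ℕ} (hs : s < L.length)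
    {u : F.W} (hu : force F (ghilardiVal A V L) u A)
    (hx : ∀ x ∈ L[s], (ghilardiVal A V L).val u (.inl x)) :
    ∃ j ≤ s + 1, force F (ghilardiVal A V (L.take j)) u A := by
  classical
  have hex : ∃ j, force F (ghilardiVal A V (L.take j)) u A :=
    ⟨L.length, by rwa [List.take_length]⟩
  obtain ⟨j, hj, hmin⟩ : ∃ j, force F (ghilardiVal A V (L.take j)) u A ∧
      ∀ i < j, ¬ force F (ghilardiVal A V (L.take i)) u A :=
    ⟨Nat.find hex, Nat.find_spec hex, fun _ => Nat.find_min hex⟩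
  cases j with
  | zero => exact ⟨0, Nat.zero_le _, hj⟩
  | succ k =>
    refine ⟨k + 1, ?_, hj⟩
    have hk : k < L.length := by
      by_contra! hk
      exact hmin k (Nat.lt_succ_self k) (by rwa [List.take_of_length_le hk])
    have hsub : L[s] ⊆ L[k] := by
      intro x hxs
      have hfinal := agreeAbove_ghilardiVal_of_take hj u (F.refl u) (.inl x)
      rw [ghilardiVal_take_succ hk] at hfinal
      exact ((comp_ghilardiStep_val_of_not_force (hmin k (Nat.lt_succ_self k)) _ x).1
        (hfinal.1 (hx x hxs))).1
    by_contra! hsk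
    exact List.pairwise_iff_getElem.1 hL s k hs hk (by omega) hsub

/-- Were `A` forced at `w` at no stage, extendability on the cone above `w` would give an
extension `U` with `δ = L[s]` the variables of `A` true at its root; stage `s + 1` then
agrees with `U` on the cone, so forces `A` at `w` after all. -/
theorem exists_take_force {E : Form var par} (hext : EExtendable A E) (hE : E.varFree)
    (hL : L.Pairwise fun X Y => ¬ X ⊆ Y) (hLA : ∀ X ⊆ A.vars, X ∈ L) {w : F.W}
    (hEw : ∀ u, F.le w u → force F V u E)
    (hsucc : ∀ u, F.le w u → ¬ F.le u w → force F (ghilardiVal A V L) u A) :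
    ∃ i, force F (ghilardiVal A V (L.take i)) w A := by
  classical
  by_contra! hnot
  set W := ghilardiVal A V L
  have hWE (u : (F.cone w).W) : force _ (W.cone w) u E := by
    refine (force_cone u).2 ((force_congr ?_ fun _ _ _ => ghilardiVal_inr).2 (hEw u.1 u.2.1))
    simp [Form.vars_eq_empty hE]
  obtain ⟨U, hU, hUA⟩ := hext.2 _ (W.cone w)
    (fun u hu => (force_cone u).2 (hsucc u.1 u.2.1 (Frame.cone_not_le hu))) hWE
  let δ := A.vars.filter fun x => U.val (F.cone w).root (.inl x)
  obtain ⟨s, hs, hδ⟩ := List.getElem_of_mem (hLA δ (Finset.filter_subset _ _))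
  have hδW : ∀ u, F.le w u → ¬ F.le u w → ∀ x ∈ L[s], W.val u (.inl x) := by
    intro u hwu huw x hx
    rw [hδ, Finset.mem_filter] at hx
    exact hU.val_of_cone_root hwu huw hx.2
  have hoff (u : (F.cone w).W) (hu : u ≠ (F.cone w).root) (a : var ⊕ par) :
      (ghilardiVal A V (L.take (s + 1))).val u.1 a ↔ U.val u a := by
    have huw := Frame.cone_not_le hu
    obtain ⟨j, hj, hjA⟩ := exists_take_force_le hL hs (hsucc u.1 u.2.1 huw) (hδW u.1 u.2.1 huw)
    exact (agreeAbove_ghilardiVal_take hj hjA u.1 (F.refl _) a).trans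
      ((agreeAbove_ghilardiVal_of_take hjA u.1 (F.refl _) a).symm.trans (hU.1 u hu a))
  have hroot : ∀ x, (ghilardiVal A V (L.take (s + 1))).val w (.inl x) ↔ x ∈ L[s] := by
    rw [ghilardiVal_take_succ hs]
    refine comp_ghilardiStep_val_iff (hnot s) fun u hwu huw hAu x hx => ?_
    exact (agreeAbove_ghilardiVal_of_take hAu u (F.refl u) _).1 (hδW u hwu huw x hx)
  refine hnot (s + 1) (force_of_agree_cone (hUA _) (fun u x hx => ?_) fun u q => ?_)
  · by_cases hu : u = (F.cone w).root
    · subst hu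
      exact (hroot x).trans (by rw [hδ, Finset.mem_filter]; exact and_iff_right hx)
    · exact hoff u hu _
  · by_cases hu : u = (F.cone w).root
    · subst hu
      exact ghilardiVal_inr.trans (ghilardiVal_inr.symm.trans (hU.2 q))
    · exact hoff u hu _

theorem force_ghilardiVal_self {E : Form var par} (hext : EExtendable A E) (hE : E.varFree)
    (hL : L.Pairwise fun X Y => ¬ X ⊆ Y) (hLA : ∀ X ⊆ A.vars, X ∈ L) {w : F.W}
    (hEw : ∀ u, F.le w u → force F V u E) : force F (ghilardiVal A V L) w A := by
  induction w using F.wellFounded_above.induction with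
  | _ w ih =>
    obtain ⟨i, hiA⟩ := exists_take_force hext hE hL hLA hEw fun u hwu huw =>
      ih u ⟨hwu, huw⟩ fun t hut => hEw t (F.trans _ _ _ hwu hut)
    exact (agreeAbove_ghilardiVal_of_take hiA).force_iff.2 hiA

end Stages

theorem EExtendable.eProjective {var par : Type} {A E : Form var par} (hE : E.varFree)
    (h : EExtendable A E) : EProjective A E := by
  classical
  obtain ⟨L, hL, hLA⟩ := exists_list_subsets_pairwise_not_subset A.vars
  refine ⟨ghilardiComp A L, fun x => prv_imp_fiff_of_forall_force fun F V w hA => ?_,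
    .fiff_intro ?_ ?_⟩
  · exact (force_ghilardiVal (B := .v x)).symm.trans
      (agreeAbove_ghilardiVal hA L w (F.refl w) _)
  · simpa [Form.subst, Form.subst_eq_self_of_varFree hE] using h.1.subst (ghilardiComp A L)
  · exact prv_imp_of_forall_force fun F V w hEw =>
      force_ghilardiVal.1 (force_ghilardiVal_self h hE hL hLA fun u hu => force_mono hu hEw)

/-- Intuitionistically, `E`-projectivity and `E`-extendability coincide for
variable-free `E`. -/
theorem eproj_iff_eextendable {var par : Type} (A E : Form var par) (hE : E.varFree) :
    EProjective A E ↔ EExtendable A E :=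
  ⟨EProjective.eExtendable, EExtendable.eProjective hE⟩
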